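/- A nonnegative matrix H ∈ R_+^{n×r} is separable (there exists an index set K of size r such that H(K,:) is a diagonal matrix with positive diagonal) if and only if the conic hull of its rows equals R_+^r, equivalently if and only if H satisfies the 1-SSC (C_1 ⊆ cone(H^T)). -/

import Mathlib

/-!
If `H` is separable, every `x ≥ 0` is the combination of the rows `H(f j, :)` with weights
`x j / H(f j, j)`. Conversely, the unit vectors `e_j` lie in `C_1` (and in the orthant), so each
`e_j` is a nonnegative combination of rows; some row `i` contributes to coordinate `j`, and since
all terms are nonnegative while the other coordinates of `e_j` vanish, row `i` is supported on `j`
alone. These rows give the index set `K`.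
-/

open scoped BigOperators

/-- The conic hull of the rows of a matrix `H ∈ ℝ^{n×r}`. -/
def rowCone {n r : ℕ} (H : Matrix (Fin n) (Fin r) ℝ) : Set (EuclideanSpace ℝ (Fin r)) :=
  {x | ∃ lam : Fin n → ℝ, (∀ i, 0 ≤ lam i) ∧
    x = ∑ i, lam i • ((WithLp.equiv 2 (Fin r → ℝ)).symm fun j => H i j)}

/-- `H` is separable: there is an index set `K` of size `r` (given by an injective map
`f : Fin r → Fin n`) such that `H(K,:)` is diagonal with positive diagonal. -/
def Separable {n r : ℕ} (H : Matrix (Fin n) (Fin r) ℝ) : Prop :=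
  ∃ f : Fin r → Fin n, Function.Injective f ∧
    (∀ i, 0 < H (f i) i) ∧ ∀ i j, i ≠ j → H (f i) j = 0

theorem mem_rowCone_iff {n r : ℕ} {H : Matrix (Fin n) (Fin r) ℝ} {x : EuclideanSpace ℝ (Fin r)} :
    x ∈ rowCone H ↔ ∃ lam : Fin n → ℝ, (∀ i, 0 ≤ lam i) ∧ ∀ k, x k = ∑ i, lam i * H i k := by
  refine exists_congr fun lam => and_congr_right fun _ => ?_
  rw [PiLp.ext_iff]
  simp [WithLp.equiv_symm_apply]

theorem rowCone_subset_nonneg {n r : ℕ} {H : Matrix (Fin n) (Fin r) ℝ} (hH : ∀ i j, 0 ≤ H i j) :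
    rowCone H ⊆ {x | ∀ j, 0 ≤ x j} := by
  intro x hx j
  obtain ⟨lam, hlam, hx⟩ := mem_rowCone_iff.mp hx
  rw [hx j]
  exact Finset.sum_nonneg fun i _ => mul_nonneg (hlam i) (hH i j)

theorem Separable.mem_rowCone {n r : ℕ} {H : Matrix (Fin n) (Fin r) ℝ} (hsep : Separable H)
    {x : EuclideanSpace ℝ (Fin r)} (hx : ∀ j, 0 ≤ x j) : x ∈ rowCone H := by
  obtain ⟨f, hf, hdiag, hoff⟩ := hsep
  set c : Fin r → ℝ := fun j => x j / H (f j) j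
  refine mem_rowCone_iff.mpr ⟨Function.extend f c 0, fun i => ?_, fun k => ?_⟩
  · by_cases hi : ∃ j, f j = i
    · obtain ⟨j, rfl⟩ := hi
      rw [hf.extend_apply]
      exact div_nonneg (hx j) (hdiag j).le
    · rw [Function.extend_apply' _ _ _ hi]; rfl
  · rw [Finset.sum_eq_single (f k) ?_ (by simp), hf.extend_apply, div_mul_cancel₀ _ (hdiag k).ne']
    intro i _ hik
    by_cases hi : ∃ j, f j = i
    · obtain ⟨j, rfl⟩ := hi
      rw [hoff j k (ne_of_apply_ne f hik), mul_zero]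
    · rw [Function.extend_apply' _ _ _ hi, Pi.zero_apply, zero_mul]

theorem exists_row_of_single_mem_rowCone {n r : ℕ} {H : Matrix (Fin n) (Fin r) ℝ}
    (hH : ∀ i j, 0 ≤ H i j) {j : Fin r} (hj : EuclideanSpace.single j (1 : ℝ) ∈ rowCone H) :
    ∃ i, 0 < H i j ∧ ∀ k, k ≠ j → H i k = 0 := by
  obtain ⟨lam, hlam, hcoord⟩ := mem_rowCone_iff.mp hj
  have hsum : ∑ i, lam i * H i j ≠ 0 := by simp [← hcoord j]
  obtain ⟨i, -, hi⟩ := Finset.exists_ne_zero_of_sum_ne_zero hsum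
  refine ⟨i, (hH i j).lt_of_ne' (right_ne_zero_of_mul hi), fun k hk => ?_⟩
  have hzero : ∑ i, lam i * H i k = 0 := by simpa [hk] using (hcoord k).symm
  have := (Finset.sum_eq_zero_iff_of_nonneg fun i _ => mul_nonneg (hlam i) (hH i k)).mp hzero i (Finset.mem_univ i)
  exact (mul_eq_zero.mp this).resolve_left (left_ne_zero_of_mul hi)

theorem separable_of_forall_single_mem_rowCone {n r : ℕ} {H : Matrix (Fin n) (Fin r) ℝ}
    (hH : ∀ i j, 0 ≤ H i j) (h : ∀ j, EuclideanSpace.single j (1 : ℝ) ∈ rowCone H) :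
    Separable H := by
  choose f hdiag hoff using fun j => exists_row_of_single_mem_rowCone hH (h j)
  refine ⟨f, fun j j' hjj' => ?_, hdiag, fun j k hjk => hoff j k hjk.symm⟩
  by_contra hne
  exact (hdiag j).ne' (hjj' ▸ hoff j' j hne)

theorem single_one_nonneg {r : ℕ} (j : Fin r) : ∀ k, 0 ≤ EuclideanSpace.single j (1 : ℝ) k := by
  intro k
  rw [PiLp.single_apply]
  split_ifs <;> norm_num

theorem norm_single_one_le_sum {r : ℕ} (j : Fin r) :
    ‖EuclideanSpace.single j (1 : ℝ)‖ ≤ ∑ k, EuclideanSpace.single j (1 : ℝ) k := by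
  simp

/-- A nonnegative matrix `H` is separable iff the conic hull of its rows is all of
`ℝ_+^r`, equivalently iff `H` satisfies the 1-SSC, `C_1 ⊆ cone(H^T)`. -/
theorem stmt7 (n r : ℕ) (H : Matrix (Fin n) (Fin r) ℝ) (hH : ∀ i j, 0 ≤ H i j) :
    (Separable H ↔ rowCone H = {x : EuclideanSpace ℝ (Fin r) | ∀ j, 0 ≤ x j}) ∧
    (Separable H ↔
      {x : EuclideanSpace ℝ (Fin r) | (∀ j, 0 ≤ x j) ∧ ‖x‖ ≤ ∑ j, x j} ⊆ rowCone H) := by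
  have of_single := separable_of_forall_single_mem_rowCone hH
  refine ⟨⟨fun hsep => ?_, fun hcone => ?_⟩, ⟨fun hsep x hx => hsep.mem_rowCone hx.1, fun hC => ?_⟩⟩
  · exact (rowCone_subset_nonneg hH).antisymm fun x hx => hsep.mem_rowCone hx
  · exact of_single fun j => hcone ▸ single_one_nonneg j
  · exact of_single fun j => hC ⟨single_one_nonneg j, norm_single_one_le_sum j⟩
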